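/- arXiv:2510.22708 — 7 statements merged into one kernel-verified Lean document; each statement's English description precedes it below -/
import Mathlib

section
/- Let k be a natural number and let G be a nilpotent subgroup of the isometry group of E_k = EuclideanSpace ℝ (Fin k) which is closed (the set of underlying functions of elements of G is closed in E_k → E_k with the topology of pointwise convergence). If the orbit of the origin under G is cocompact, i.e. there exists R > 0 such that for every x ∈ E_k there is g ∈ G with dist x (g 0) ≤ R, then G acts on E_k by translations: for every g ∈ G there exists v ∈ E_k such that g x = x + v for all x ∈ E_k. -/
/-!
By Mazur–Ulam an isometry is affine, `g x = A x + g 0`; write `N_g = A - 1`, so that `g` is a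
translation iff `N_g = 0`. Whenever `⁅g, h⁆` is a translation, comparing `g (h 0)` with `h (g 0)`
gives `N_g (h 0) - N_h (g 0) = ⁅g, h⁆ 0`. Induct along the upper central series `Z i`, with `V j`
the closed span of the translation vectors of `Z j`. For `g ∈ Z (i + 1)`, this identity,
`‖N_h‖ ≤ 2` and cocompactness of `G • 0` put every `N_g v` within bounded distance of `V i`, hence
in `V i` by linearity; applied to translations `h ∈ Z (j + 1)` it gives `N_g (V (j + 1)) ⊆ V j`.
So `N_g` is nilpotent, and a norm-preserving unipotent operator is the identity: otherwise some
`A^[n] x = x + n • y` with `y ≠ 0` would be unbounded.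
-/

open scoped commutatorElement

theorem norm_eq_zero_of_forall_natCast_smul_le {E : Type*} [SeminormedAddCommGroup E]
    [NormedSpace ℝ E] {y : E} {C : ℝ} (h : ∀ n : ℕ, ‖(n : ℝ) • y‖ ≤ C) : ‖y‖ = 0 := by
  refine le_antisymm (not_lt.mp fun hy => ?_) (norm_nonneg y)
  obtain ⟨n, hn⟩ := exists_nat_gt (C / ‖y‖)
  have hle := h n
  rw [norm_smul, Real.norm_natCast] at hle
  rw [div_lt_iff₀ hy] at hn
  linarith

theorem LinearMap.range_le_of_forall_infDist_le {E F : Type*} [SeminormedAddCommGroup E]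
    [NormedSpace ℝ E] [SeminormedAddCommGroup F] [NormedSpace ℝ F]
    {S : Submodule ℝ F} (hS : IsClosed (S : Set F)) (f : E →ₗ[ℝ] F) {C : ℝ}
    (h : ∀ v, Metric.infDist (f v) S ≤ C) : LinearMap.range f ≤ S := by
  rintro _ ⟨v, rfl⟩
  -- the quotient norm is `infDist · S`, and `n ↦ ‖n • S.mkQ (f v)‖` stays below `C`
  have hq : ‖S.mkQ (f v)‖ = 0 := norm_eq_zero_of_forall_natCast_smul_le fun n => by
    rw [← map_smul, ← map_smul]
    exact (QuotientAddGroup.norm_mk _).trans_le (h _)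
  rw [← SetLike.mem_coe, ← hS.closure_eq]
  exact (QuotientAddGroup.norm_mk_eq_zero_iff_mem_closure (S := S.toAddSubgroup)).mp hq

namespace Module.End

theorem isNilpotent_of_range_le {R M : Type*} [Semiring R] [AddCommMonoid M] [Module R M]
    {N : Module.End R M} {V : ℕ → Submodule R M} (hV₀ : V 0 = ⊥) {i : ℕ}
    (hV : ∀ j < i, V (j + 1) ≤ (V j).comap N) (hN : LinearMap.range N ≤ V i) :
    IsNilpotent N := by
  have hpow : ∀ m, (∀ j < m, V (j + 1) ≤ (V j).comap N) → ∀ v ∈ V m, (N ^ m) v = 0 := by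
    intro m
    induction m with
    | zero => simp [hV₀]
    | succ m ih =>
      intro hVm v hv
      rw [pow_succ, Module.End.mul_apply]
      exact ih (fun j hj => hVm j (by omega)) (N v) (hVm m (by omega) hv)
  refine ⟨i + 1, LinearMap.ext fun v => ?_⟩
  rw [pow_succ, Module.End.mul_apply]
  exact hpow i hV (N v) (hN ⟨v, rfl⟩)

variable {E : Type*} [NormedAddCommGroup E] [NormedSpace ℝ E]

theorem apply_eq_self_of_apply_sub_self {A : Module.End ℝ E} (hA : ∀ x, ‖A x‖ = ‖x‖) {x : E}
    (hx : A (A x - x) = A x - x) : A x = x := by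
  set y := A x - x
  have hiter : ∀ n : ℕ, A^[n] x = x + (n : ℝ) • y := by
    intro n
    induction n with
    | zero => simp
    | succ n ih =>
      rw [Function.iterate_succ_apply', ih, map_add, map_smul, hx, Nat.cast_succ, add_smul,
        one_smul]
      simp only [y]
      abel
  have hnorm : ∀ n : ℕ, ‖A^[n] x‖ = ‖x‖ := by
    intro n
    induction n with
    | zero => rfl
    | succ n ih => rw [Function.iterate_succ_apply', hA, ih]
  have hy : ‖y‖ = 0 := norm_eq_zero_of_forall_natCast_smul_le (C := 2 * ‖x‖) fun n =>
    calc ‖(n : ℝ) • y‖ = ‖A^[n] x - x‖ := by rw [hiter, add_sub_cancel_left]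
      _ ≤ ‖A^[n] x‖ + ‖x‖ := norm_sub_le _ _
      _ = 2 * ‖x‖ := by rw [hnorm]; ring
  exact sub_eq_zero.mp (norm_eq_zero.mp hy)

theorem eq_one_of_isNilpotent_sub_one {A : Module.End ℝ E} (hA : ∀ x, ‖A x‖ = ‖x‖)
    (h : IsNilpotent (A - 1)) : A = 1 := by
  obtain ⟨m, hm⟩ := h
  suffices ∀ m : ℕ, ∀ x, ((A - 1) ^ m) x = 0 → A x = x from
    LinearMap.ext fun x => this m x (by rw [hm, LinearMap.zero_apply])
  intro m
  induction m with
  | zero => simp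
  | succ m ih =>
    intro x hx
    rw [pow_succ, Module.End.mul_apply] at hx
    refine apply_eq_self_of_apply_sub_self hA (ih _ ?_)
    simpa using hx

end Module.End

namespace IsometryEquiv

variable {E : Type*} [NormedAddCommGroup E] [NormedSpace ℝ E]

def IsTranslation (g : E ≃ᵢ E) : Prop :=
  ∀ x, g x = x + g 0

noncomputable def linearPartSubOne (g : E ≃ᵢ E) : Module.End ℝ E :=
  g.toRealLinearIsometryEquiv.toLinearMap - 1

@[simp]
theorem linearPartSubOne_apply (g : E ≃ᵢ E) (x : E) : g.linearPartSubOne x = g x - g 0 - x := by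
  simp [linearPartSubOne]

theorem isTranslation_iff_linearPartSubOne_eq_zero {g : E ≃ᵢ E} :
    g.IsTranslation ↔ g.linearPartSubOne = 0 := by
  simp only [IsTranslation, LinearMap.ext_iff, linearPartSubOne_apply, LinearMap.zero_apply,
    sub_sub, sub_eq_zero, add_comm]

theorem continuous_linearPartSubOne (g : E ≃ᵢ E) : Continuous g.linearPartSubOne :=
  g.toRealLinearIsometryEquiv.continuous.sub continuous_id

theorem norm_linearPartSubOne_apply_le (g : E ≃ᵢ E) (x : E) :
    ‖g.linearPartSubOne x‖ ≤ 2 * ‖x‖ :=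
  calc ‖g.linearPartSubOne x‖ ≤ ‖g.toRealLinearIsometryEquiv x‖ + ‖x‖ := norm_sub_le _ _
    _ = 2 * ‖x‖ := by rw [LinearIsometryEquiv.norm_map]; ring

theorem linearPartSubOne_sub_linearPartSubOne_of_isTranslation_commutator {g h : E ≃ᵢ E}
    (hc : IsTranslation ⁅g, h⁆) :
    g.linearPartSubOne (h 0) - h.linearPartSubOne (g 0) = ⁅g, h⁆ 0 := by
  have hgh : g (h 0) = h (g 0) + ⁅g, h⁆ 0 := by
    rw [← hc, ← mul_apply, ← mul_apply, ← mul_apply, commutatorElement_def]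
    group
  simp only [linearPartSubOne_apply, hgh]
  abel

section Subgroup

variable {G : Subgroup (E ≃ᵢ E)}

noncomputable def orbitClosedSpan (H : Subgroup G) : Submodule ℝ E :=
  (Submodule.span ℝ ((fun t : G => (t : E ≃ᵢ E) 0) '' H)).topologicalClosure

theorem isClosed_orbitClosedSpan (H : Subgroup G) : IsClosed (orbitClosedSpan H : Set E) :=
  Submodule.isClosed_topologicalClosure _

theorem apply_zero_mem_orbitClosedSpan {H : Subgroup G} {t : G} (ht : t ∈ H) :
    (t : E ≃ᵢ E) 0 ∈ orbitClosedSpan H :=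
  Submodule.le_topologicalClosure _ (Submodule.subset_span ⟨t, ht, rfl⟩)

theorem orbitClosedSpan_bot : orbitClosedSpan (⊥ : Subgroup G) = ⊥ := by
  refine le_bot_iff.mp (Submodule.topologicalClosure_minimal _ ?_ ?_)
  · simp
  · simpa only [Submodule.bot_coe] using isClosed_singleton

theorem orbitClosedSpan_le_comap {H K : Subgroup G} {f : Module.End ℝ E} (hf : Continuous f)
    (h : ∀ t ∈ H, f ((t : E ≃ᵢ E) 0) ∈ orbitClosedSpan K) :
    orbitClosedSpan H ≤ (orbitClosedSpan K).comap f :=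
  Submodule.topologicalClosure_minimal _
    (Submodule.span_le.mpr (by rintro _ ⟨t, ht, rfl⟩; exact h t ht))
    ((isClosed_orbitClosedSpan K).preimage hf)

theorem orbitClosedSpan_upperCentralSeries_succ_le_comap {j : ℕ}
    (htrans : ∀ t ∈ Subgroup.upperCentralSeries G (j + 1), IsTranslation (t : E ≃ᵢ E)) (g : G) :
    orbitClosedSpan (Subgroup.upperCentralSeries G (j + 1)) ≤
      (orbitClosedSpan (Subgroup.upperCentralSeries G j)).comap (g : E ≃ᵢ E).linearPartSubOne := by
  refine orbitClosedSpan_le_comap (continuous_linearPartSubOne _) fun t ht => ?_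
  have hc : ⁅t, g⁆ ∈ Subgroup.upperCentralSeries G j :=
    Subgroup.mem_upperCentralSeries_succ_iff.mp ht g
  have hcomm := linearPartSubOne_sub_linearPartSubOne_of_isTranslation_commutator
    (htrans _ (Subgroup.upperCentralSeries_mono G j.le_succ hc))
  rw [isTranslation_iff_linearPartSubOne_eq_zero.mp (htrans t ht), LinearMap.zero_apply, zero_sub,
    neg_eq_iff_eq_neg] at hcomm
  rw [hcomm]
  exact neg_mem (apply_zero_mem_orbitClosedSpan hc)

theorem range_linearPartSubOne_le_orbitClosedSpan {R : ℝ}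
    (hR : ∀ x : E, ∃ h ∈ G, dist x (h 0) ≤ R) {i : ℕ}
    (htrans : ∀ t ∈ Subgroup.upperCentralSeries G i, IsTranslation (t : E ≃ᵢ E)) {g : G}
    (hg : g ∈ Subgroup.upperCentralSeries G (i + 1)) :
    LinearMap.range (g : E ≃ᵢ E).linearPartSubOne ≤
      orbitClosedSpan (Subgroup.upperCentralSeries G i) := by
  refine LinearMap.range_le_of_forall_infDist_le (isClosed_orbitClosedSpan _) _
    (C := 2 * R + 2 * ‖(g : E ≃ᵢ E) 0‖) fun v => ?_
  obtain ⟨h, hG, hvh⟩ := hR v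
  have hc : ⁅g, ⟨h, hG⟩⁆ ∈ Subgroup.upperCentralSeries G i :=
    Subgroup.mem_upperCentralSeries_succ_iff.mp hg _
  set N := (g : E ≃ᵢ E).linearPartSubOne
  have hcomm : N (h 0) - h.linearPartSubOne ((g : E ≃ᵢ E) 0) = ⁅(g : E ≃ᵢ E), h⁆ 0 :=
    linearPartSubOne_sub_linearPartSubOne_of_isTranslation_commutator (htrans _ hc)
  calc Metric.infDist (N v) (orbitClosedSpan (Subgroup.upperCentralSeries G i))
      ≤ dist (N v) (⁅(g : E ≃ᵢ E), h⁆ 0) :=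
        Metric.infDist_le_dist_of_mem (apply_zero_mem_orbitClosedSpan hc)
    _ = ‖N (v - h 0) + h.linearPartSubOne ((g : E ≃ᵢ E) 0)‖ := by
        rw [dist_eq_norm, ← hcomm, map_sub]
        congr 1
        abel
    _ ≤ ‖N (v - h 0)‖ + ‖h.linearPartSubOne ((g : E ≃ᵢ E) 0)‖ := norm_add_le _ _
    _ ≤ 2 * ‖v - h 0‖ + 2 * ‖(g : E ≃ᵢ E) 0‖ :=
        add_le_add (norm_linearPartSubOne_apply_le _ _) (norm_linearPartSubOne_apply_le _ _)
    _ ≤ 2 * R + 2 * ‖(g : E ≃ᵢ E) 0‖ := by rw [← dist_eq_norm]; linarith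

theorem isTranslation_of_mem_upperCentralSeries {R : ℝ}
    (hR : ∀ x : E, ∃ h ∈ G, dist x (h 0) ≤ R) (i : ℕ) :
    ∀ g ∈ Subgroup.upperCentralSeries G i, IsTranslation (g : E ≃ᵢ E) := by
  induction i with
  | zero =>
    intro g hg
    rw [Subgroup.upperCentralSeries_zero, Subgroup.mem_bot] at hg
    simp [hg, IsTranslation]
  | succ i ih =>
    intro g hg
    have hnil : IsNilpotent (g : E ≃ᵢ E).linearPartSubOne :=
      Module.End.isNilpotent_of_range_le
        (V := fun j => orbitClosedSpan (Subgroup.upperCentralSeries G j)) orbitClosedSpan_bot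
        (fun j hj => orbitClosedSpan_upperCentralSeries_succ_le_comap
          (fun t ht => ih t (Subgroup.upperCentralSeries_mono G hj ht)) g)
        (range_linearPartSubOne_le_orbitClosedSpan hR ih hg)
    exact isTranslation_iff_linearPartSubOne_eq_zero.mpr <| sub_eq_zero.mpr <|
      Module.End.eq_one_of_isNilpotent_sub_one (LinearIsometryEquiv.norm_map _) hnil

end Subgroup

end IsometryEquiv

theorem closed_nilpotent_cocompact_subgroup_acts_by_translations_general (k : ℕ)
    (G : Subgroup (EuclideanSpace ℝ (Fin k) ≃ᵢ EuclideanSpace ℝ (Fin k)))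
    (hnil : Group.IsNilpotent G)
    (hcocompact : ∃ R : ℝ, 0 < R ∧ ∀ x : EuclideanSpace ℝ (Fin k),
      ∃ g ∈ G, dist x (g (0 : EuclideanSpace ℝ (Fin k))) ≤ R) :
    ∀ g ∈ G, ∃ v : EuclideanSpace ℝ (Fin k),
      ∀ x : EuclideanSpace ℝ (Fin k), g x = x + v := by
  intro g hg
  obtain ⟨R, -, hR⟩ := hcocompact
  obtain ⟨n, hn⟩ := hnil
  exact ⟨g 0, IsometryEquiv.isTranslation_of_mem_upperCentralSeries hR n ⟨g, hg⟩
    (hn.symm ▸ Subgroup.mem_top _)⟩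

/-- A closed nilpotent subgroup of the isometry group of Euclidean space whose
orbit of the origin is cocompact acts by translations. -/
theorem closed_nilpotent_cocompact_subgroup_acts_by_translations (k : ℕ)
    (G : Subgroup (EuclideanSpace ℝ (Fin k) ≃ᵢ EuclideanSpace ℝ (Fin k)))
    (hnil : Group.IsNilpotent G)
    (hclosed : IsClosed {f : EuclideanSpace ℝ (Fin k) → EuclideanSpace ℝ (Fin k) |
      ∃ g ∈ G, ⇑g = f})
    (hcocompact : ∃ R : ℝ, 0 < R ∧ ∀ x : EuclideanSpace ℝ (Fin k),
      ∃ g ∈ G, dist x (g (0 : EuclideanSpace ℝ (Fin k))) ≤ R) :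
    ∀ g ∈ G, ∃ v : EuclideanSpace ℝ (Fin k),
      ∀ x : EuclideanSpace ℝ (Fin k), g x = x + v :=
  closed_nilpotent_cocompact_subgroup_acts_by_translations_general k G hnil hcocompact
end

section
/- Let k be a natural number and let K be a subgroup of the isometry group of E_k = EuclideanSpace ℝ (Fin k) which is closed (the set of underlying functions of elements of K is closed in E_k → E_k with the topology of pointwise convergence). Suppose the orbit of the origin under K is not contained in any half-space; that is, there exists no unit vector v ∈ E_k such that ⟪v, g 0⟫ ≥ 0 for all g ∈ K. Then the orbit K·0 is cocompact: there exists R > 0 such that for every x ∈ E_k there is g ∈ K with dist x (g 0) ≤ R. -/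
open scoped RealInnerProductSpace
open Filter Topology Metric

/-!
If the orbit `K • 0` is not cobounded, pick a point `x` far from it and an orbit point `g 0` almost
realising `infDist x (K • 0)`; translating by `g⁻¹` gives points `y` with `‖y‖` arbitrarily large
such that the open ball of radius `‖y‖ - ε` about `y` misses the orbit. Expanding
`(‖y‖ - ε)² ≤ ‖y - q‖²` gives `⟪-y / ‖y‖, q⟫ ≥ -(‖q‖² / (2‖y‖) + ε)` for every orbit point `q`,
and a limit `v` of the unit vectors `-y / ‖y‖`, which exists by compactness of the sphere, spans a
half-space containing the orbit.
-/

section Halfspace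

variable {E : Type*} [NormedAddCommGroup E] [InnerProductSpace ℝ E]

theorem inner_le_of_norm_sub_le_dist {y q : E} {ε : ℝ} (hε : ε ≤ ‖y‖)
    (h : ‖y‖ - ε ≤ dist y q) : ⟪y, q⟫ ≤ ‖q‖ ^ 2 / 2 + ε * ‖y‖ := by
  have hsq : (‖y‖ - ε) ^ 2 ≤ ‖y - q‖ ^ 2 := by
    rw [← dist_eq_norm]
    exact pow_le_pow_left₀ (sub_nonneg.2 hε) h 2
  rw [norm_sub_sq_real] at hsq
  nlinarith [sq_nonneg ε]

theorem neg_le_inner_neg_normalize_of_norm_sub_le_dist {y q : E} {ε : ℝ} (hy : 0 < ‖y‖)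
    (hε : ε ≤ ‖y‖) (h : ‖y‖ - ε ≤ dist y q) :
    -(‖q‖ ^ 2 / (2 * ‖y‖) + ε) ≤ ⟪-(‖y‖⁻¹ • y), q⟫ := by
  have hinner := inner_le_of_norm_sub_le_dist hε h
  rw [inner_neg_left, real_inner_smul_left, neg_le_neg_iff]
  calc ‖y‖⁻¹ * ⟪y, q⟫ ≤ ‖y‖⁻¹ * (‖q‖ ^ 2 / 2 + ε * ‖y‖) := by gcongr
    _ = ‖q‖ ^ 2 / (2 * ‖y‖) + ε := by field_simp

theorem exists_norm_eq_one_forall_inner_nonneg_of_empty_balls [ProperSpace E] {S : Set E}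
    (h : ∀ R ε : ℝ, 0 < ε → ∃ y : E, R ≤ ‖y‖ ∧ ∀ q ∈ S, ‖y‖ - ε ≤ dist y q) :
    ∃ v : E, ‖v‖ = 1 ∧ ∀ q ∈ S, 0 ≤ ⟪v, q⟫ := by
  choose y hy_large hy_empty using fun n : ℕ => h (n + 1) (1 / (n + 1)) (by positivity)
  have hone_le (n : ℕ) : (1 : ℝ) ≤ ‖y n‖ := by linarith [hy_large n, n.cast_nonneg (α := ℝ)]
  have hy_pos (n : ℕ) : 0 < ‖y n‖ := one_pos.trans_le (hone_le n)
  have hε_le (n : ℕ) : 1 / ((n : ℝ) + 1) ≤ ‖y n‖ :=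
    (div_le_one_of_le₀ (by simp) (by positivity)).trans (hone_le n)
  have hy_top : Tendsto (fun n => ‖y n‖) atTop atTop :=
    tendsto_atTop_mono (fun n => by linarith [hy_large n]) tendsto_natCast_atTop_atTop
  set u : ℕ → E := fun n => -(‖y n‖⁻¹ • y n)
  have hu_sphere (n : ℕ) : u n ∈ sphere (0 : E) 1 := by
    simp [u, norm_smul, (hy_pos n).ne']
  obtain ⟨v, hv, φ, hφ, hu_tendsto⟩ := (isCompact_sphere (0 : E) 1).tendsto_subseq hu_sphere
  refine ⟨v, by simpa using hv, fun q hq => ?_⟩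
  have hbound_tendsto :
      Tendsto (fun n => -(‖q‖ ^ 2 / (2 * ‖y n‖) + 1 / ((n : ℝ) + 1))) atTop (𝓝 0) := by
    simpa using ((tendsto_const_nhds.div_atTop (hy_top.const_mul_atTop two_pos)).add
      tendsto_one_div_add_atTop_nhds_zero_nat).neg
  exact le_of_tendsto_of_tendsto' (hbound_tendsto.comp hφ.tendsto_atTop)
    (hu_tendsto.inner tendsto_const_nhds) fun n =>
      neg_le_inner_neg_normalize_of_norm_sub_le_dist (hy_pos _) (hε_le _) (hy_empty _ q hq)

end Halfspace

theorem exists_dist_sub_le_dist_orbit_of_not_cobounded {X : Type*} [PseudoMetricSpace X]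
    {K : Subgroup (X ≃ᵢ X)} {x₀ : X}
    (hK : ¬ ∃ R : ℝ, 0 < R ∧ ∀ x : X, ∃ g ∈ K, dist x (g x₀) ≤ R) (R ε : ℝ) (hε : 0 < ε) :
    ∃ y : X, R ≤ dist y x₀ ∧ ∀ g ∈ K, dist y x₀ - ε ≤ dist y (g x₀) := by
  set S : Set X := (fun g : X ≃ᵢ X => g x₀) '' K
  have hS : S.Nonempty := ⟨_, Set.mem_image_of_mem _ K.one_mem⟩
  push Not at hK
  obtain ⟨x, hx⟩ := hK (max R 1) (by positivity)
  obtain ⟨_, ⟨g, hg, rfl⟩, hgx⟩ := (infDist_lt_iff (x := x) hS).1 (lt_add_of_pos_right _ hε)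
  have hdist (p : X) : dist (g⁻¹ x) p = dist x (g p) := by
    rw [← g.dist_eq, IsometryEquiv.apply_inv_self]
  refine ⟨g⁻¹ x, by rw [hdist]; exact (le_max_left _ _).trans (hx g hg).le, fun h hh => ?_⟩
  have hgh : infDist x S ≤ dist x ((g * h) x₀) :=
    infDist_le_dist_of_mem ⟨g * h, K.mul_mem hg hh, rfl⟩
  rw [hdist, hdist, ← IsometryEquiv.mul_apply]
  linarith

theorem orbit_not_in_halfspace_implies_cocompact_general (k : ℕ)
    (K : Subgroup (EuclideanSpace ℝ (Fin k) ≃ᵢ EuclideanSpace ℝ (Fin k)))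
    (hhalf : ¬ ∃ v : EuclideanSpace ℝ (Fin k), ‖v‖ = 1 ∧
      ∀ g ∈ K, 0 ≤ ⟪v, g (0 : EuclideanSpace ℝ (Fin k))⟫) :
    ∃ R : ℝ, 0 < R ∧ ∀ x : EuclideanSpace ℝ (Fin k),
      ∃ g ∈ K, dist x (g (0 : EuclideanSpace ℝ (Fin k))) ≤ R := by
  by_contra hK
  obtain ⟨v, hv, hS⟩ := exists_norm_eq_one_forall_inner_nonneg_of_empty_balls
    (S := (fun g : EuclideanSpace ℝ (Fin k) ≃ᵢ EuclideanSpace ℝ (Fin k) => g 0) '' K)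
    fun R ε hε => by
      obtain ⟨y, hyR, hy⟩ := exists_dist_sub_le_dist_orbit_of_not_cobounded hK R ε hε
      refine ⟨y, by rwa [← dist_zero_right], ?_⟩
      rintro _ ⟨g, hg, rfl⟩
      simpa only [dist_zero_right] using hy g hg
  exact hhalf ⟨v, hv, fun g hg => hS _ ⟨g, hg, rfl⟩⟩

/-- If the orbit of the origin under a closed subgroup of the isometry group of
Euclidean space is not contained in any half-space, then the orbit is cocompact. -/
theorem orbit_not_in_halfspace_implies_cocompact (k : ℕ)
    (K : Subgroup (EuclideanSpace ℝ (Fin k) ≃ᵢ EuclideanSpace ℝ (Fin k)))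
    (hclosed : IsClosed {f : EuclideanSpace ℝ (Fin k) → EuclideanSpace ℝ (Fin k) |
      ∃ g ∈ K, ⇑g = f})
    (hhalf : ¬ ∃ v : EuclideanSpace ℝ (Fin k), ‖v‖ = 1 ∧
      ∀ g ∈ K, 0 ≤ ⟪v, g (0 : EuclideanSpace ℝ (Fin k))⟫) :
    ∃ R : ℝ, 0 < R ∧ ∀ x : EuclideanSpace ℝ (Fin k),
      ∃ g ∈ K, dist x (g (0 : EuclideanSpace ℝ (Fin k))) ≤ R :=
  orbit_not_in_halfspace_implies_cocompact_general k K hhalf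
end

section
/- Let Γ be a group acting by isometries on a metric space X, let p ∈ X, and let Γ̂ be a normal subgroup of Γ. For r ≥ 0 set Γ(r) := {γ ∈ Γ : dist p (γ • p) ≤ r}, Γ̂(r) := {γ ∈ Γ̂ : dist p (γ • p) ≤ r}, and let (Γ/Γ̂)(r) denote the set of cosets c ∈ Γ/Γ̂ that contain some element γ with dist p (γ • p) ≤ r. Then for every r ≥ 0 such that Γ(r) is finite, one has the cardinality inequality |Γ̂(r/2)| · |(Γ/Γ̂)(r/2)| ≤ |Γ(r)|. -/
/-!
Fix a representative `γ_c` of every coset `c` that meets `Γ(r/2)`. For `h ∈ Γ̂(r/2)` the product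
`γ_c h` moves `p` by at most `r/2 + r/2 = r`, since the action is isometric, and `(c, h) ↦ γ_c h` is
injective because `γ_c h` lies in the coset `c` and the representative can then be cancelled.
-/

open Pointwise

theorem Subgroup.card_mul_card_image_mk_le {Γ : Type*} [Group Γ] (H : Subgroup Γ)
    {A T C : Set Γ} (hA : A ⊆ H) (hC : C.Finite) (hTAC : T * A ⊆ C) :
    Nat.card A * Nat.card (QuotientGroup.mk '' T : Set (Γ ⧸ H)) ≤ Nat.card C := by
  have : Finite C := hC.to_subtype
  choose s hsT hs using fun b : (QuotientGroup.mk '' T : Set (Γ ⧸ H)) => b.2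
  let f : A × (QuotientGroup.mk '' T : Set (Γ ⧸ H)) → C :=
    fun x => ⟨s x.2 * x.1, hTAC (Set.mul_mem_mul (hsT x.2) x.1.2)⟩
  have hf_coset : ∀ x, ((f x : Γ) : Γ ⧸ H) = x.2 := fun x => by
    rw [QuotientGroup.mk_mul_of_mem _ (hA x.1.2), hs]
  have hf : Function.Injective f := by
    rintro ⟨a₁, b₁⟩ ⟨a₂, b₂⟩ h
    have h' : s b₁ * a₁ = s b₂ * a₂ := congrArg Subtype.val h
    obtain rfl : b₁ = b₂ := Subtype.ext <| by
      rw [← hf_coset (a₁, b₁), ← hf_coset (a₂, b₂), h]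
    obtain rfl : a₁ = a₂ := Subtype.ext (mul_left_cancel h')
    rfl
  rw [← Nat.card_prod]
  exact Nat.card_le_card_of_injective f hf

section OrbitBall

variable (Γ : Type*) {X : Type*} [Group Γ] [PseudoMetricSpace X] [MulAction Γ X]

def orbitBall (p : X) (r : ℝ) : Set Γ := {γ | dist p (γ • p) ≤ r}

variable {Γ} [IsIsometricSMul Γ X]

theorem dist_mul_smul_le (p : X) (a b : Γ) :
    dist p ((a * b) • p) ≤ dist p (a • p) + dist p (b • p) := calc
  dist p ((a * b) • p) ≤ dist p (a • p) + dist (a • p) (a • b • p) := by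
    rw [mul_smul]; exact dist_triangle _ _ _
  _ = dist p (a • p) + dist p (b • p) := by rw [dist_smul]

theorem orbitBall_mul_orbitBall_subset (p : X) (r s : ℝ) :
    orbitBall Γ p r * orbitBall Γ p s ⊆ orbitBall Γ p (r + s) := by
  rintro _ ⟨a, ha, b, hb, rfl⟩
  exact (dist_mul_smul_le p a b).trans (add_le_add ha hb)

end OrbitBall

theorem subgroup_quotient_orbit_growth_general {Γ X : Type*} [Group Γ] [MetricSpace X]
    [MulAction Γ X] (hiso : ∀ γ : Γ, Isometry (fun x : X => γ • x))
    (p : X) (Γhat : Subgroup Γ)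
    (r : ℝ)
    (hfin : {γ : Γ | dist p (γ • p) ≤ r}.Finite) :
    Nat.card {γ : Γ | γ ∈ Γhat ∧ dist p (γ • p) ≤ r / 2} *
      Nat.card {c : Γ ⧸ Γhat |
        ∃ γ : Γ, QuotientGroup.mk γ = c ∧ dist p (γ • p) ≤ r / 2} ≤
    Nat.card {γ : Γ | dist p (γ • p) ≤ r} := by
  have : IsIsometricSMul Γ X := ⟨hiso⟩
  have hQ : {c : Γ ⧸ Γhat | ∃ γ : Γ, QuotientGroup.mk γ = c ∧ dist p (γ • p) ≤ r / 2} =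
      QuotientGroup.mk '' orbitBall Γ p (r / 2) := by
    ext c
    simp only [Set.mem_ofPred_eq, Set.mem_image, orbitBall, and_comm]
  rw [hQ]
  refine Γhat.card_mul_card_image_mk_le (A := ↑Γhat ∩ orbitBall Γ p (r / 2))
    Set.inter_subset_left hfin ?_
  calc orbitBall Γ p (r / 2) * (↑Γhat ∩ orbitBall Γ p (r / 2))
      ⊆ orbitBall Γ p (r / 2) * orbitBall Γ p (r / 2) :=
        Set.mul_subset_mul_left Set.inter_subset_right
    _ ⊆ orbitBall Γ p (r / 2 + r / 2) := orbitBall_mul_orbitBall_subset p _ _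
    _ = orbitBall Γ p r := by rw [add_halves]

/-- Growth comparison between a group, a normal subgroup, and the quotient:
`|Γ̂(r/2)| · |(Γ/Γ̂)(r/2)| ≤ |Γ(r)|`. -/
theorem subgroup_quotient_orbit_growth {Γ X : Type*} [Group Γ] [MetricSpace X]
    [MulAction Γ X] (hiso : ∀ γ : Γ, Isometry (fun x : X => γ • x))
    (p : X) (Γhat : Subgroup Γ) (hnorm : Γhat.Normal)
    (r : ℝ) (hr : 0 ≤ r)
    (hfin : {γ : Γ | dist p (γ • p) ≤ r}.Finite) :
    Nat.card {γ : Γ | γ ∈ Γhat ∧ dist p (γ • p) ≤ r / 2} *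
      Nat.card {c : Γ ⧸ Γhat |
        ∃ γ : Γ, QuotientGroup.mk γ = c ∧ dist p (γ • p) ≤ r / 2} ≤
    Nat.card {γ : Γ | dist p (γ • p) ≤ r} :=
  subgroup_quotient_orbit_growth_general hiso p Γhat r hfin
end

section
/- Let n, k be natural numbers and let Γ be a subgroup of the isometry group of E_n = EuclideanSpace ℝ (Fin n) which is isomorphic to ℤ^k and closed (the set of underlying functions of elements of Γ is closed in E_n → E_n with the topology of pointwise convergence). Then Γ acts freely on E_n: for every γ ∈ Γ with γ ≠ id and every x ∈ E_n, γ x ≠ x. -/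
/-!
The stabilizer of a point `x` in `Γ` is countable, and as a set of maps it is compact: it is
closed and lies in the product of the balls `closedBall x (dist y x)`. By Baire, a countable
compact Hausdorff space has an isolated point; since the stabilizer acts transitively on itself by
homeomorphisms, all its points are isolated, so it is finite. A finite subgroup of the
torsion-free group `ℤᵏ` is trivial.
-/

open Set MulAction

theorem finite_of_countable_of_isPretransitive (G Z : Type*) [Group G] [MulAction G Z]
    [IsPretransitive G Z] [TopologicalSpace Z] [ContinuousConstSMul G Z] [CompactSpace Z]
    [T2Space Z] [Countable Z] : Finite Z := by
  cases isEmpty_or_nonempty Z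
  · infer_instance
  obtain ⟨i, hi⟩ := nonempty_interior_of_iUnion_of_closed (fun _ => isClosed_singleton)
    (iUnion_of_singleton Z)
  have hi_open : IsOpen ({i} : Set Z) := by
    rw [← hi.subset_singleton_iff.mp interior_subset]
    exact isOpen_interior
  have : DiscreteTopology Z := discreteTopology_iff_isOpen_singleton.mpr fun j => by
    obtain ⟨g, rfl⟩ := exists_smul_eq G i j
    simpa using hi_open.smul g
  exact finite_of_compact_of_discrete

theorem Set.Finite.of_isCompact_orbit {G Y : Type*} [Group G] [MulAction G Y]
    [TopologicalSpace Y] [T2Space Y] [ContinuousConstSMul G Y] {H : Subgroup G} [Countable H]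
    {y : Y} (h : IsCompact (orbit H y)) : (orbit H y).Finite := by
  have : CompactSpace (orbit H y) := isCompact_iff_compactSpace.mp h
  have : Countable (orbit H y) := (countable_range fun g : H => g • y).to_subtype
  have : ContinuousConstSMul H (orbit H y) :=
    ⟨fun g => ((continuous_const_smul (g : G)).comp continuous_subtype_val).subtype_mk _⟩
  exact Set.finite_coe_iff.mp (finite_of_countable_of_isPretransitive H (orbit H y))

namespace IsometryEquiv

variable {X : Type*} [MetricSpace X]

instance applyMulAction : MulAction (X ≃ᵢ X) X where
  smul γ x := γ x
  one_smul _ := rfl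
  mul_smul _ _ _ := rfl

instance : IsIsometricSMul (X ≃ᵢ X) X := ⟨fun γ => γ.isometry⟩

variable [ProperSpace X] {Γ : Subgroup (X ≃ᵢ X)}

/- Under the pointwise action of `X ≃ᵢ X` on `X → X`, the orbit of `id` under a subgroup is the
set of underlying maps of its elements. -/
theorem isCompact_orbit_id_stabilizer (hΓ : IsClosed {f : X → X | ∃ γ ∈ Γ, ⇑γ = f})
    (x : X) : IsCompact (orbit (Γ ⊓ stabilizer (X ≃ᵢ X) x : Subgroup (X ≃ᵢ X)) (id : X → X)) := by
  have h_eq : orbit (Γ ⊓ stabilizer (X ≃ᵢ X) x : Subgroup (X ≃ᵢ X)) id =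
      {f : X → X | ∃ γ ∈ Γ, ⇑γ = f} ∩ {f | f x = x} := by
    ext f
    constructor
    · rintro ⟨⟨γ, hγ, hγx⟩, rfl⟩
      exact ⟨⟨γ, hγ, rfl⟩, hγx⟩
    · rintro ⟨⟨γ, hγ, rfl⟩, hγx⟩
      exact ⟨⟨γ, hγ, hγx⟩, rfl⟩
  have h_sub : {f : X → X | ∃ γ ∈ Γ, ⇑γ = f} ∩ {f | f x = x} ⊆
      univ.pi fun y => Metric.closedBall x (dist y x) := by
    rintro _ ⟨⟨γ, -, rfl⟩, (hγx : γ x = x)⟩ y -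
    rw [Metric.mem_closedBall, ← γ.dist_eq y x, hγx]
  rw [h_eq]
  exact (isCompact_univ_pi fun y => isCompact_closedBall x _).of_isClosed_subset
    (hΓ.inter (isClosed_eq (continuous_apply x) continuous_const)) h_sub

theorem finite_stabilizer_of_isClosed [Countable Γ]
    (hΓ : IsClosed {f : X → X | ∃ γ ∈ Γ, ⇑γ = f}) (x : X) :
    Finite (Γ ⊓ stabilizer (X ≃ᵢ X) x : Subgroup (X ≃ᵢ X)) := by
  set H : Subgroup (X ≃ᵢ X) := Γ ⊓ stabilizer (X ≃ᵢ X) x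
  have : Countable H := (Subgroup.inclusion_injective inf_le_left).countable
  have : Finite (orbit H (id : X → X)) :=
    (Set.Finite.of_isCompact_orbit (isCompact_orbit_id_stabilizer hΓ x)).to_subtype
  exact Finite.of_injective
    (fun g : H => (⟨g • id, mem_orbit _ g⟩ : orbit H (id : X → X)))
    fun g g' hgg' => Subtype.ext <| DFunLike.coe_injective <| congrArg Subtype.val hgg'

theorem eq_one_of_apply_eq_self_of_isClosed [Countable Γ] [IsMulTorsionFree Γ]
    (hΓ : IsClosed {f : X → X | ∃ γ ∈ Γ, ⇑γ = f}) {γ : X ≃ᵢ X} (hγ : γ ∈ Γ) {x : X}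
    (hγx : γ x = x) : γ = 1 := by
  have := finite_stabilizer_of_isClosed hΓ x
  have h_fin : IsOfFinOrder (⟨γ, hγ⟩ : Γ) :=
    (Subgroup.inclusion inf_le_left).isOfFinOrder
      (isOfFinOrder_of_finite (⟨γ, hγ, hγx⟩ : ↥(Γ ⊓ stabilizer (X ≃ᵢ X) x)))
  exact congrArg Subtype.val h_fin.eq_one'

end IsometryEquiv

/-- A closed subgroup of the isometry group of `ℝⁿ` that is isomorphic to `ℤᵏ`
acts freely on `ℝⁿ`. -/
theorem closed_zk_subgroup_acts_freely (n k : ℕ)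
    (Γ : Subgroup (EuclideanSpace ℝ (Fin n) ≃ᵢ EuclideanSpace ℝ (Fin n)))
    (hiso : Nonempty (Γ ≃* Multiplicative (Fin k → ℤ)))
    (hclosed : IsClosed {f : EuclideanSpace ℝ (Fin n) → EuclideanSpace ℝ (Fin n) |
      ∃ γ ∈ Γ, ⇑γ = f}) :
    ∀ γ ∈ Γ, γ ≠ 1 → ∀ x : EuclideanSpace ℝ (Fin n), γ x ≠ x := by
  obtain ⟨e⟩ := hiso
  have : Countable Γ := (Multiplicative.toAdd.injective.comp e.injective).countable
  have : IsMulTorsionFree Γ := e.injective.isMulTorsionFree e.toMonoidHom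
  exact fun γ hγ hγ1 x hγx =>
    hγ1 (IsometryEquiv.eq_one_of_apply_eq_self_of_isClosed hclosed hγ hγx)
end

section
/- Let E be a finite-dimensional real inner product space of dimension k, let f : E → E be a surjective isometry, and let v_1, …, v_k ∈ E be linearly independent vectors (hence a basis of E) such that f commutes with the translation by each v_i, i.e. f(x + v_i) = f(x) + v_i for all x ∈ E and all i. Then f is itself a translation: there exists w ∈ E such that f(x) = x + w for all x ∈ E. -/
/-! By the strict convexity of an inner product space, every isometry is affine (Mazur–Ulam
without surjectivity). Commuting with the translation by `v` says exactly that the linear part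
fixes `v`; if the `v i` span the space, the linear part is the identity, and an affine map with
identity linear part is the translation by `f 0`. -/

namespace AffineMap

variable {k V : Type*} [Ring k] [AddCommGroup V] [Module k V]

theorem linear_apply_eq_of_map_add_eq {f : V →ᵃ[k] V} {x v : V} (h : f (x + v) = f x + v) :
    f.linear v = v := by
  have hmap : f (v +ᵥ x) = f.linear v +ᵥ f x := f.map_vadd x v
  rw [vadd_eq_add, add_comm v x, h, vadd_eq_add, add_comm] at hmap
  exact (add_right_cancel hmap).symm

theorem eq_add_of_map_add_eq_of_span_eq_top {ι : Type*} {f : V →ᵃ[k] V} {v : ι → V}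
    (hspan : Submodule.span k (Set.range v) = ⊤) (hcomm : ∀ i x, f (x + v i) = f x + v i)
    (x : V) : f x = x + f 0 := by
  have hlin : f.linear = LinearMap.id :=
    LinearMap.ext_on_range hspan fun i => linear_apply_eq_of_map_add_eq (hcomm i 0)
  rw [congrFun f.decomp x, hlin]
  rfl

end AffineMap

theorem Isometry.exists_eq_add_of_map_add_eq_of_span_eq_top {E ι : Type*}
    [NormedAddCommGroup E] [NormedSpace ℝ E] [StrictConvexSpace ℝ E] {f : E → E}
    (hf : Isometry f) {v : ι → E} (hspan : Submodule.span ℝ (Set.range v) = ⊤)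
    (hcomm : ∀ i x, f (x + v i) = f x + v i) : ∃ w, ∀ x, f x = x + w := by
  set A := hf.affineIsometryOfStrictConvexSpace.toAffineMap
  have hA : ⇑A = f := hf.coe_affineIsometryOfStrictConvexSpace
  refine ⟨f 0, fun x => ?_⟩
  rw [← hA] at hcomm ⊢
  exact A.eq_add_of_map_add_eq_of_span_eq_top hspan hcomm x

theorem isometry_commuting_with_independent_translations_is_translation_general
    {E : Type*} [NormedAddCommGroup E] [InnerProductSpace ℝ E]
    [FiniteDimensional ℝ E] (k : ℕ) (hdim : Module.finrank ℝ E = k)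
    (f : E → E) (hf : Isometry f)
    (v : Fin k → E) (hli : LinearIndependent ℝ v)
    (hcomm : ∀ (i : Fin k) (x : E), f (x + v i) = f x + v i) :
    ∃ w : E, ∀ x : E, f x = x + w := by
  have hspan : Submodule.span ℝ (Set.range v) = ⊤ :=
    hli.span_eq_top_of_card_eq_finrank' (by rw [Fintype.card_fin, hdim])
  exact hf.exists_eq_add_of_map_add_eq_of_span_eq_top hspan hcomm

/-- A surjective isometry of a `k`-dimensional real inner product space which
commutes with `k` linearly independent translations is itself a translation. -/
theorem isometry_commuting_with_independent_translations_is_translation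
    {E : Type*} [NormedAddCommGroup E] [InnerProductSpace ℝ E]
    [FiniteDimensional ℝ E] (k : ℕ) (hdim : Module.finrank ℝ E = k)
    (f : E → E) (hf : Isometry f) (hsurj : Function.Surjective f)
    (v : Fin k → E) (hli : LinearIndependent ℝ v)
    (hcomm : ∀ (i : Fin k) (x : E), f (x + v i) = f x + v i) :
    ∃ w : E, ∀ x : E, f x = x + w :=
  isometry_commuting_with_independent_translations_is_translation_general k hdim f hf v hli hcomm
end

section
/- Let k be a natural number and let G be an abelian subgroup of the isometry group of E_k = EuclideanSpace ℝ (Fin k) whose orbit of the origin is cocompact, i.e. there exists R > 0 such that for every x ∈ E_k there is g ∈ G with dist x (g 0) ≤ R. Then G acts on E_k by translations: for every g ∈ G there exists v ∈ E_k such that g x = x + v for all x ∈ E_k. -/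
/-! Commuting with `h` turns the displacement of `g` at `h 0` into its displacement at `0`, so
cocompactness of the orbit bounds the displacement `x ↦ dist (g x) x` on all of space. By
Mazur–Ulam `g x = A x + g 0` with `A` linear, so `A - id` is a bounded linear map, hence zero. -/

theorem LinearMap.eq_zero_of_norm_le {𝕜 E F : Type*} [NontriviallyNormedField 𝕜]
    [AddCommGroup E] [Module 𝕜 E] [NormedAddCommGroup F] [NormedSpace 𝕜 F]
    (L : E →ₗ[𝕜] F) (C : ℝ) (hC : ∀ x, ‖L x‖ ≤ C) : L = 0 := by
  ext x
  by_contra hx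
  have hpos : 0 < ‖L x‖ := norm_pos_iff.mpr hx
  obtain ⟨c, hc⟩ := NormedField.exists_lt_norm 𝕜 (C / ‖L x‖)
  have hle := hC (c • x)
  rw [map_smul, norm_smul] at hle
  rw [div_lt_iff₀ hpos] at hc
  linarith

theorem IsometryEquiv.apply_eq_add_of_dist_le {E : Type*} [NormedAddCommGroup E]
    [NormedSpace ℝ E] (g : E ≃ᵢ E) (C : ℝ) (hC : ∀ x, dist (g x) x ≤ C) (x : E) :
    g x = x + g 0 := by
  set L : E →ₗ[ℝ] E := (g.toRealLinearIsometryEquiv : E →ₗ[ℝ] E) - LinearMap.id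
  have hL : ∀ y, L y = (g y - y) - g 0 := fun y => by
    change g.toRealLinearIsometryEquiv y - y = _
    rw [toRealLinearIsometryEquiv_apply]
    abel
  have hbound : ∀ y, ‖L y‖ ≤ C + ‖g 0‖ := fun y =>
    calc ‖L y‖ ≤ ‖g y - y‖ + ‖g 0‖ := hL y ▸ norm_sub_le _ _
      _ ≤ C + ‖g 0‖ := by rw [← dist_eq_norm]; gcongr; exact hC y
  have hx := hL x
  rw [L.eq_zero_of_norm_le _ hbound, LinearMap.zero_apply] at hx
  linear_combination (norm := module) -hx

theorem IsometryEquiv.dist_apply_self_le_of_commute {X : Type*} [PseudoMetricSpace X]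
    {g h : X ≃ᵢ X} (hgh : Commute g h) (p x : X) :
    dist (g x) x ≤ 2 * dist x (h p) + dist (g p) p := by
  have hcomm : g (h p) = h (g p) := congrArg (fun f : X ≃ᵢ X => f p) hgh.eq
  calc dist (g x) x ≤ dist (g x) (g (h p)) + dist (g (h p)) (h p) + dist (h p) x :=
        dist_triangle4 _ _ _ _
    _ = 2 * dist x (h p) + dist (g p) p := by
        rw [g.dist_eq, hcomm, h.dist_eq, dist_comm (h p) x]
        ring

/-- An abelian subgroup of the isometry group of Euclidean space whose orbit
of the origin is cocompact acts by translations. -/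
theorem abelian_cocompact_subgroup_acts_by_translations (k : ℕ)
    (G : Subgroup (EuclideanSpace ℝ (Fin k) ≃ᵢ EuclideanSpace ℝ (Fin k)))
    (hab : ∀ g ∈ G, ∀ h ∈ G, g * h = h * g)
    (hcocompact : ∃ R : ℝ, 0 < R ∧ ∀ x : EuclideanSpace ℝ (Fin k),
      ∃ g ∈ G, dist x (g (0 : EuclideanSpace ℝ (Fin k))) ≤ R) :
    ∀ g ∈ G, ∃ v : EuclideanSpace ℝ (Fin k),
      ∀ x : EuclideanSpace ℝ (Fin k), g x = x + v := by
  obtain ⟨R, -, horbit⟩ := hcocompact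
  intro g hg
  refine ⟨g 0, g.apply_eq_add_of_dist_le (2 * R + dist (g 0) 0) fun x => ?_⟩
  obtain ⟨h, hh, hxh⟩ := horbit x
  calc dist (g x) x ≤ 2 * dist x (h 0) + dist (g 0) 0 :=
        IsometryEquiv.dist_apply_self_le_of_commute (hab g hg h hh) 0 x
    _ ≤ 2 * R + dist (g 0) 0 := by gcongr
end

section
/- Let G be a group that is nilpotent and torsion-free (no element other than the identity has finite order). If G contains an abelian subgroup of finite index, then G is abelian. -/
/-!
If `⁅x, y⁆` is central, then `⁅x ^ n, y⁆ = ⁅x, y⁆ ^ n`; so when the centre is torsion-free,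
`x ^ n` commuting with `y` forces `x` to commute with `y`. Applied to a central `x ^ n`, this
passes torsion-freeness from `Z(G)` to the centre of `G ⧸ Z(G)`, and by induction on the
nilpotency class a nilpotent group with torsion-free centre is torsion-free. Hence for `G`
torsion-free and nilpotent, `G ⧸ Z(G)` is again torsion-free, and a second induction along
`G → G ⧸ Z(G)` shows that `x` commutes with `y` as soon as some `x ^ n`, `n ≠ 0`, does. If `H` is
abelian of finite index, any two elements have positive powers in `H`, which commute.
-/

open Subgroup
open scoped commutatorElement

section

variable {G : Type*} [Group G]

namespace Subgroup

/- Mathlib's `IsMulTorsionFree` asks for injectivity of `x ↦ x ^ n`, which is stronger than the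
absence of torsion for non-commutative groups. -/
def IsTorsionFree (N : Subgroup G) : Prop :=
  ∀ g ∈ N, ∀ n : ℕ, n ≠ 0 → g ^ n = 1 → g = 1

theorem isTorsionFree_top_iff :
    (⊤ : Subgroup G).IsTorsionFree ↔ ∀ g : G, g ≠ 1 → ¬IsOfFinOrder g := by
  simp only [IsTorsionFree, mem_top, true_implies, isOfFinOrder_iff_pow_eq_one, not_exists,
    not_and, Nat.pos_iff_ne_zero]
  exact ⟨fun h g hg n hn hgn => hg (h g n hn hgn),
    fun h g n hn hgn => by_contra fun hg => h g hg n hn hgn⟩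

theorem IsTorsionFree.mono {M N : Subgroup G} (hN : N.IsTorsionFree) (hMN : M ≤ N) :
    M.IsTorsionFree :=
  fun g hg => hN g (hMN hg)

theorem IsTorsionFree.top_of_quotient {N : Subgroup G} [N.Normal] (hN : N.IsTorsionFree)
    (hQ : (⊤ : Subgroup (G ⧸ N)).IsTorsionFree) : (⊤ : Subgroup G).IsTorsionFree := by
  intro g _ n hn hgn
  have hgN : (g : G ⧸ N) = 1 := hQ g trivial n hn (by rw [← QuotientGroup.mk_pow, hgn]; rfl)
  exact hN g ((QuotientGroup.eq_one_iff g).mp hgN) n hn hgn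

end Subgroup

theorem QuotientGroup.commute_mk_iff_commutatorElement_mem {N : Subgroup G} [N.Normal]
    {x y : G} : Commute (x : G ⧸ N) y ↔ ⁅x, y⁆ ∈ N := by
  rw [← commutatorElement_eq_one_iff_commute, ← QuotientGroup.eq_one_iff]
  exact Iff.of_eq (congrArg (· = 1) (map_commutatorElement (QuotientGroup.mk' N) x y).symm)

theorem commutatorElement_pow_left_of_mem_center {x y : G} (h : ⁅x, y⁆ ∈ center G) (n : ℕ) :
    ⁅x ^ n, y⁆ = ⁅x, y⁆ ^ n := by
  induction n with
  | zero => simp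
  | succ n ih =>
    have hcomm : x * ⁅x, y⁆ ^ n * x⁻¹ = ⁅x, y⁆ ^ n := by
      rw [mem_center_iff.mp (pow_mem h n) x, mul_inv_cancel_right]
    rw [pow_succ', commutatorElement_mul_left_eq_conj_mul, ih, hcomm, pow_succ]

theorem commute_of_commute_pow_of_commutatorElement_mem_center (hZ : (center G).IsTorsionFree)
    {x y : G} (h : ⁅x, y⁆ ∈ center G) {n : ℕ} (hn : n ≠ 0) (hxy : Commute (x ^ n) y) :
    Commute x y := by
  rw [← commutatorElement_eq_one_iff_commute] at hxy ⊢
  exact hZ _ h n hn (by rw [← commutatorElement_pow_left_of_mem_center h, hxy])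

theorem isTorsionFree_center_quotient_center (hZ : (center G).IsTorsionFree) :
    (center (G ⧸ center G)).IsTorsionFree := by
  intro q hq n hn hqn
  obtain ⟨x, rfl⟩ := QuotientGroup.mk_surjective q
  have hxnZ : x ^ n ∈ center G := (QuotientGroup.eq_one_iff _).mp hqn
  refine (QuotientGroup.eq_one_iff x).mpr (mem_center_iff.mpr fun g => ?_)
  have hxg : ⁅x, g⁆ ∈ center G := QuotientGroup.commute_mk_iff_commutatorElement_mem.mp
    (mem_center_iff.mp hq (g : G ⧸ center G)).symm
  exact (commute_of_commute_pow_of_commutatorElement_mem_center hZ hxg hn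
    (mem_center_iff.mp hxnZ g).symm).symm

theorem isTorsionFree_top_of_isTorsionFree_center [Group.IsNilpotent G]
    (hZ : (center G).IsTorsionFree) : (⊤ : Subgroup G).IsTorsionFree := by
  refine Group.nilpotent_center_quotient_ind
    (P := fun G _ _ => (center G).IsTorsionFree → (⊤ : Subgroup G).IsTorsionFree) G ?_ ?_ hZ
  · exact fun G _ _ _ g _ _ _ _ => Subsingleton.elim g 1
  · exact fun G _ _ ih hZ => hZ.top_of_quotient (ih (isTorsionFree_center_quotient_center hZ))

theorem isTorsionFree_top_quotient_center [Group.IsNilpotent G]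
    (htf : (⊤ : Subgroup G).IsTorsionFree) : (⊤ : Subgroup (G ⧸ center G)).IsTorsionFree :=
  isTorsionFree_top_of_isTorsionFree_center
    (isTorsionFree_center_quotient_center (htf.mono le_top))

theorem commute_of_commute_pow [Group.IsNilpotent G] (htf : (⊤ : Subgroup G).IsTorsionFree)
    {x y : G} {n : ℕ} (hn : n ≠ 0) (hxy : Commute (x ^ n) y) : Commute x y := by
  revert x y n
  refine Group.nilpotent_center_quotient_ind (P := fun G _ _ => (⊤ : Subgroup G).IsTorsionFree →
    ∀ {x y : G} {n : ℕ}, n ≠ 0 → Commute (x ^ n) y → Commute x y) G ?_ ?_ htf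
  · exact fun G _ _ _ _ _ _ _ _ => Subsingleton.elim _ _
  · intro G _ _ ih htf x y n hn hxy
    have hxyQ : Commute (x : G ⧸ center G) y := ih (isTorsionFree_top_quotient_center htf) hn
      (by rw [← QuotientGroup.mk_pow]; exact hxy.map (QuotientGroup.mk' _))
    exact commute_of_commute_pow_of_commutatorElement_mem_center (htf.mono le_top)
      (QuotientGroup.commute_mk_iff_commutatorElement_mem.mp hxyQ) hn hxy

end

/-- A torsion-free nilpotent group which is virtually abelian is abelian. -/
theorem torsionfree_nilpotent_virtually_abelian_is_abelian
    {G : Type*} [Group G] [Group.IsNilpotent G]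
    (htf : ∀ g : G, g ≠ 1 → ¬IsOfFinOrder g)
    (H : Subgroup G) (hab : ∀ a ∈ H, ∀ b ∈ H, a * b = b * a)
    (hfin : H.index ≠ 0) :
    ∀ g h : G, g * h = h * g := by
  have htf' : (⊤ : Subgroup G).IsTorsionFree := isTorsionFree_top_iff.mpr htf
  intro g h
  obtain ⟨m, hm, -, hgm⟩ := exists_pow_mem_of_index_ne_zero hfin g
  obtain ⟨k, hk, -, hhk⟩ := exists_pow_mem_of_index_ne_zero hfin h
  have hgh : Commute g (h ^ k) := commute_of_commute_pow htf' hm.ne' (hab _ hgm _ hhk)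
  exact (commute_of_commute_pow htf' hk.ne' hgh.symm).symm
end
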